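/- arXiv:2309.00175 — 3 statements merged into one kernel-verified Lean document; each statement's English description precedes it below -/
import Mathlib

section
/- Suppose the constant state (ρ*, m*) is supersonic, i.e. γρ*^{γ−1} < m*²/ρ*². Then there exist ξ ∈ ℝ with ξ ≠ 0 and λ ∈ ℂ with Re λ > 0 such that λ² + (μξ² + 2iξ m*/ρ*)·λ + ξ²·((k²/2)ξ² − (m*²/ρ*² − γρ*^{γ−1})) = 0. (Hence the linearization of the viscous QHD system about a supersonic state is not strictly dissipative.) -/
/-- Supersonic constant states of the viscous QHD system violate strict dissipativity:
there is a nonzero frequency `ξ` and a root `λ` of the dispersion relation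
`λ² + (μξ² + 2iξ m*/ρ*)λ + ξ²((k²/2)ξ² − (m*²/ρ*² − γρ*^{γ−1})) = 0`
with strictly positive real part. -/
theorem supersonic_not_strictly_dissipative
    (ρs ms μ k γ : ℝ) (hρ : 0 < ρs) (hμ : 0 < μ) (hk : 0 < k) (hγ : 1 < γ)
    (hsup : γ * ρs ^ (γ - 1) < ms ^ 2 / ρs ^ 2) :
    ∃ ξ : ℝ, ξ ≠ 0 ∧ ∃ lam : ℂ, 0 < lam.re ∧
      lam ^ 2
        + (((μ * ξ ^ 2 : ℝ) : ℂ) + 2 * Complex.I * (ξ : ℂ) * ((ms / ρs : ℝ) : ℂ)) * lam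
        + ((ξ ^ 2 : ℝ) : ℂ) *
            (((k ^ 2 / 2 * ξ ^ 2 : ℝ) : ℂ)
              - ((ms ^ 2 / ρs ^ 2 - γ * ρs ^ (γ - 1) : ℝ) : ℂ)) = 0 := by
  set c : ℝ := ms ^ 2 / ρs ^ 2 - γ * ρs ^ (γ - 1) with hc_def
  have hc : 0 < c := by simp [hc_def]; linarith
  set ξ : ℝ := Real.sqrt c / k with hξ_def
  have hsc : 0 < Real.sqrt c := Real.sqrt_pos.mpr hc
  have hξpos : 0 < ξ := div_pos hsc hk
  have hξ : ξ ≠ 0 := ne_of_gt hξpos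
  have hξ2 : ξ ^ 2 = c / k ^ 2 := by
    rw [hξ_def, div_pow, Real.sq_sqrt hc.le]
  have hkξ : k ^ 2 / 2 * ξ ^ 2 = c / 2 := by
    rw [hξ2]; field_simp
  -- real coefficients
  set a : ℝ := ms / ρs with ha_def
  set p : ℝ := μ * ξ ^ 2 with hp_def
  set q : ℝ := 2 * ξ * a with hq_def
  set C : ℝ := ξ ^ 2 * (k ^ 2 / 2 * ξ ^ 2 - c) with hC_def
  have hp : 0 < p := mul_pos hμ (pow_pos hξpos 2)
  have hC : C < 0 := by
    rw [hC_def, hkξ]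
    have : c / 2 - c < 0 := by linarith
    exact mul_neg_of_pos_of_neg (pow_pos hξpos 2) this
  -- real-part function along the curve y = -q x/(2x+p)
  set f : ℝ → ℝ := fun x => x ^ 2 - (q * x / (2 * x + p)) ^ 2 + p * x
      + q ^ 2 * x / (2 * x + p) + C with hf_def
  set M : ℝ := |q| / 2 + Real.sqrt (-C) with hM_def
  have hM0 : 0 ≤ M := by positivity
  clear_value M f C q p a ξ c
  have hden : ∀ x : ℝ, 0 ≤ x → (0 : ℝ) < 2 * x + p := fun x hx => by linarith
  have hcont : ContinuousOn f (Set.Icc 0 M) := by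
    rw [hf_def]
    apply ContinuousOn.add
    apply ContinuousOn.add
    apply ContinuousOn.add
    apply ContinuousOn.sub
    · fun_prop
    · apply ContinuousOn.pow
      apply ContinuousOn.div (by fun_prop) (by fun_prop)
      intro x hx; exact ne_of_gt (hden x hx.1)
    · fun_prop
    · apply ContinuousOn.div (by fun_prop) (by fun_prop)
      intro x hx; exact ne_of_gt (hden x hx.1)
    · fun_prop
  have hf0 : f 0 = C := by simp [hf_def]
  have hfM : 0 ≤ f M := by
    have hdM : 0 < 2 * M + p := hden M hM0
    have hy2 : (q * M / (2 * M + p)) ^ 2 ≤ q ^ 2 / 4 := by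
      rw [div_pow]
      rw [div_le_div_iff₀ (by positivity) (by norm_num)]
      have h1 : (M : ℝ) ≤ 2 * M + p := by linarith
      have h2 : (q * M) ^ 2 * 4 = q ^ 2 * (2 * M) ^ 2 := by ring
      rw [h2]
      have h3 : (2 * M) ^ 2 ≤ (2 * M + p) ^ 2 := by nlinarith
      exact mul_le_mul_of_nonneg_left h3 (sq_nonneg q)
    have hterm : 0 ≤ q ^ 2 * M / (2 * M + p) := by positivity
    have hM2 : q ^ 2 / 4 + (-C) ≤ M ^ 2 := by
      have hs : Real.sqrt (-C) ^ 2 = -C := Real.sq_sqrt (by linarith)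
      have habs : (|q| / 2) ^ 2 = q ^ 2 / 4 := by
        rw [div_pow, sq_abs]; norm_num
      have hcross : 0 ≤ 2 * (|q| / 2) * Real.sqrt (-C) := by positivity
      have hexp : M ^ 2 = (|q| / 2) ^ 2 + 2 * (|q| / 2) * Real.sqrt (-C)
          + Real.sqrt (-C) ^ 2 := by rw [hM_def]; ring
      rw [hexp, habs, hs]; linarith
    have hpM : 0 ≤ p * M := mul_nonneg hp.le hM0
    simp only [hf_def]
    nlinarith
  obtain ⟨x, hxmem, hfx⟩ := intermediate_value_Icc hM0 hcont
      (Set.mem_Icc.mpr ⟨by rw [hf0]; exact hC.le, hfM⟩ : (0:ℝ) ∈ Set.Icc (f 0) (f M))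
  have hx0 : 0 ≤ x := hxmem.1
  have hxpos : 0 < x := by
    rcases lt_or_eq_of_le hx0 with h | h
    · exact h
    · exfalso; rw [← h] at hfx; rw [hf0] at hfx; linarith
  have hdx : (0 : ℝ) < 2 * x + p := hden x hx0
  set y : ℝ := -(q * x / (2 * x + p)) with hy_def
  clear_value y
  refine ⟨ξ, hξ, (x : ℂ) + (y : ℂ) * Complex.I, by simp [hxpos], ?_⟩
  -- rewrite coefficients as p + qI and C
  have hcoef : ((μ * ξ ^ 2 : ℝ) : ℂ) + 2 * Complex.I * (ξ : ℂ) * ((a : ℝ) : ℂ)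
      = (p : ℂ) + (q : ℂ) * Complex.I := by
    rw [hp_def, hq_def]
    push_cast
    ring
  have hconst : ((ξ ^ 2 : ℝ) : ℂ) * (((k ^ 2 / 2 * ξ ^ 2 : ℝ) : ℂ)
      - ((c : ℝ) : ℂ)) = (C : ℂ) := by
    rw [hC_def]
    push_cast
    ring
  rw [hcoef, hconst]
  have hre : x ^ 2 - y ^ 2 + p * x - q * y + C = 0 := by
    rw [hy_def]
    have : x ^ 2 - (-(q * x / (2 * x + p))) ^ 2 + p * x - q * (-(q * x / (2 * x + p))) + C
        = f x := by
      simp only [hf_def]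
      ring
    rw [this, hfx]
  have him : 2 * x * y + p * y + q * x = 0 := by
    rw [hy_def]
    field_simp
    ring
  have key : ((x : ℂ) + (y : ℂ) * Complex.I) ^ 2
      + ((p : ℂ) + (q : ℂ) * Complex.I) * ((x : ℂ) + (y : ℂ) * Complex.I) + (C : ℂ)
      = ((x ^ 2 - y ^ 2 + p * x - q * y + C : ℝ) : ℂ)
        + ((2 * x * y + p * y + q * x : ℝ) : ℂ) * Complex.I := by
    push_cast
    linear_combination ((y : ℂ) ^ 2 + (q : ℂ) * (y : ℂ)) * Complex.I_sq
  rw [key, hre, him]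
  simp
end

section
/- Suppose γρ*^{γ−1} < m*²/ρ*², and set β* = m*²/ρ*² − γρ*^{γ−1} > 0, a(ξ) = ξ²·(ξ²(μ² − 2k²) − 4γρ*^{γ−1}) and b(ξ) = 4μξ³ m*/ρ*. Then there exists δ > 0 such that for all ξ with 0 < |ξ| < δ one has (1/√2)·√( a(ξ) + √(a(ξ)² + b(ξ)²) ) > μξ². Consequently the root λ₊(ξ) = −(μ/2)ξ² − iξ m*/ρ* + (1/2)Δ(ξ)^{1/2} of the dispersion relation, where Δ(ξ) = a(ξ) + i b(ξ), has strictly positive real part for 0 < |ξ| < δ. -/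
/-- The odd/even parts of the discriminant of the dispersion relation of the
linearized viscous QHD system about a supersonic state. -/
noncomputable def aDisc (ρs μ k γ ξ : ℝ) : ℝ :=
  ξ ^ 2 * (ξ ^ 2 * (μ ^ 2 - 2 * k ^ 2) - 4 * (γ * ρs ^ (γ - 1)))

noncomputable def bDisc (ρs ms μ ξ : ℝ) : ℝ :=
  4 * μ * ξ ^ 3 * ms / ρs

lemma re_cpow_half (z : ℂ) (hz : z.im ≠ 0) :
    (z ^ ((1:ℂ)/2)).re = Real.sqrt ((‖z‖ + z.re) / 2) := by
  set w := z ^ ((1:ℂ)/2) with hw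
  have hz0 : z ≠ 0 := fun h => hz (by simp [h])
  have hw2 : w ^ 2 = z := by
    rw [hw, one_div]
    simpa using Complex.cpow_nat_inv_pow z (n := 2) two_ne_zero
  have habs2 : w.re ^ 2 + w.im ^ 2 = ‖z‖ := by
    have : ‖w‖ ^ 2 = ‖z‖ := by
      rw [← hw2, norm_pow]
    rw [← this, Complex.sq_norm, Complex.normSq_apply]; ring
  have hre2 : w.re ^ 2 - w.im ^ 2 = z.re := by
    rw [← hw2]; simp [pow_two, Complex.mul_re]
  have hresq : w.re ^ 2 = (‖z‖ + z.re) / 2 := by linarith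
  have hrenneg : 0 ≤ w.re := by
    rw [hw, Complex.cpow_def_of_ne_zero hz0, Complex.exp_re]
    have harg : (Complex.log z * ((1:ℂ)/2)).im = z.arg / 2 := by
      simp [Complex.mul_im, Complex.log_im]; ring
    rw [harg]
    have h1 : -(Real.pi) ≤ z.arg := (Complex.neg_pi_lt_arg z).le
    have h2 : z.arg ≤ Real.pi := Complex.arg_le_pi z
    have : 0 ≤ Real.cos (z.arg / 2) := by
      apply Real.cos_nonneg_of_mem_Icc
      constructor <;> linarith
    positivity
  rw [← hresq, Real.sqrt_sq hrenneg]

/-- For supersonic states, for all sufficiently small nonzero frequencies `ξ` the real part of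
the principal square root of the discriminant `Δ(ξ) = a(ξ) + i b(ξ)` exceeds `μ ξ²`, i.e.
`(1/√2)·√(a(ξ) + √(a(ξ)² + b(ξ)²)) > μ ξ²`; consequently the root
`λ₊(ξ) = −(μ/2)ξ² − iξ m*/ρ* + (1/2)Δ(ξ)^{1/2}` of the dispersion relation has strictly
positive real part. -/
theorem supersonic_lambda_plus_pos_re
    (ρs ms μ k γ : ℝ) (hρ : 0 < ρs) (hμ : 0 < μ) (hk : 0 < k) (hγ : 1 < γ)
    (hsup : γ * ρs ^ (γ - 1) < ms ^ 2 / ρs ^ 2) :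
    ∃ δ : ℝ, 0 < δ ∧ ∀ ξ : ℝ, 0 < |ξ| → |ξ| < δ →
      (1 / Real.sqrt 2) *
          Real.sqrt (aDisc ρs μ k γ ξ +
            Real.sqrt ((aDisc ρs μ k γ ξ) ^ 2 + (bDisc ρs ms μ ξ) ^ 2)) > μ * ξ ^ 2 ∧
      0 < (-(((μ / 2 * ξ ^ 2 : ℝ) : ℂ)) - Complex.I * (ξ : ℂ) * ((ms / ρs : ℝ) : ℂ)
            + (1 / 2 : ℂ) *
              (((aDisc ρs μ k γ ξ : ℝ) : ℂ) + ((bDisc ρs ms μ ξ : ℝ) : ℂ) * Complex.I)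
                ^ ((1 : ℂ) / 2)).re := by
  set c : ℝ := γ * ρs ^ (γ - 1) with hc
  have hcpos : 0 < c := by
    have : (0:ℝ) < ρs ^ (γ - 1) := Real.rpow_pos_of_pos hρ _
    positivity
  set β : ℝ := ms ^ 2 / ρs ^ 2 - c with hβdef
  have hβ : 0 < β := by simp [hβdef]; linarith
  have hms : ms ≠ 0 := by
    intro h
    rw [h] at hsup; simp at hsup; linarith
  refine ⟨Real.sqrt (2 * β / k ^ 2), Real.sqrt_pos.mpr (by positivity), ?_⟩
  intro ξ hξ0 hξδ
  have hξne : ξ ≠ 0 := by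
    intro h; rw [h] at hξ0; simp at hξ0
  have ht : 0 < ξ ^ 2 := by positivity
  have htβ : k ^ 2 * ξ ^ 2 < 2 * β := by
    have h1 : ξ ^ 2 < 2 * β / k ^ 2 := by
      have := Real.sq_sqrt (show (0:ℝ) ≤ 2 * β / k ^ 2 by positivity)
      calc ξ ^ 2 = |ξ| ^ 2 := (sq_abs ξ).symm
        _ < Real.sqrt (2 * β / k ^ 2) ^ 2 := by
            apply pow_lt_pow_left₀ hξδ (abs_nonneg ξ) two_ne_zero
        _ = 2 * β / k ^ 2 := this
    calc k ^ 2 * ξ ^ 2 < k ^ 2 * (2 * β / k ^ 2) := by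
          exact mul_lt_mul_of_pos_left h1 (by positivity)
      _ = 2 * β := by field_simp
  set a : ℝ := aDisc ρs μ k γ ξ with ha
  set b : ℝ := bDisc ρs ms μ ξ with hb
  have hbsq : b ^ 2 = 16 * μ ^ 2 * ξ ^ 6 * (ms ^ 2 / ρs ^ 2) := by
    rw [hb, bDisc]; field_simp; ring
  have hB : ms ^ 2 / ρs ^ 2 = β + c := by rw [hβdef]; ring
  have hbne : b ≠ 0 := by
    rw [hb, bDisc]
    exact div_ne_zero (mul_ne_zero (mul_ne_zero (mul_ne_zero four_ne_zero hμ.ne')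
      (pow_ne_zero 3 hξne)) hms) hρ.ne'
  -- key inequality: √(a²+b²) > 2μ²ξ⁴ - a
  have hkey : 2 * μ ^ 2 * ξ ^ 4 - a < Real.sqrt (a ^ 2 + b ^ 2) := by
    rcases le_or_gt (2 * μ ^ 2 * ξ ^ 4 - a) 0 with h | h
    · rcases h.lt_or_eq with h | h
      · exact h.trans_le (Real.sqrt_nonneg _)
      · rw [h]
        apply Real.sqrt_pos.mpr
        positivity
    · rw [show a = ξ ^ 2 * (ξ ^ 2 * (μ ^ 2 - 2 * k ^ 2) - 4 * c) from ha] at h ⊢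
      rw [Real.lt_sqrt h.le]
      have h8 : 8 * μ ^ 2 * ξ ^ 6 * (k ^ 2 * ξ ^ 2) < 8 * μ ^ 2 * ξ ^ 6 * (2 * β) := by
        apply mul_lt_mul_of_pos_left htβ; positivity
      rw [hB] at hbsq
      nlinarith [h8, hbsq]
  have hsum : 2 * μ ^ 2 * ξ ^ 4 < a + Real.sqrt (a ^ 2 + b ^ 2) := by linarith
  have hsumnn : 0 ≤ a + Real.sqrt (a ^ 2 + b ^ 2) := by nlinarith [sq_nonneg (μ * ξ ^ 2)]
  -- first part
  have hfirst : (1 / Real.sqrt 2) * Real.sqrt (a + Real.sqrt (a ^ 2 + b ^ 2)) > μ * ξ ^ 2 := by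
    have heq : (1 / Real.sqrt 2) * Real.sqrt (a + Real.sqrt (a ^ 2 + b ^ 2))
        = Real.sqrt ((a + Real.sqrt (a ^ 2 + b ^ 2)) / 2) := by
      rw [Real.sqrt_div hsumnn]; ring
    rw [gt_iff_lt, heq, Real.lt_sqrt (by positivity)]
    nlinarith [hsum]
  refine ⟨hfirst, ?_⟩
  -- second part
  set z : ℂ := ((a : ℝ) : ℂ) + ((b : ℝ) : ℂ) * Complex.I with hz
  have hzre : z.re = a := by simp [hz]
  have hzim : z.im = b := by simp [hz]
  have habs : ‖z‖ = Real.sqrt (a ^ 2 + b ^ 2) := by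
    rw [Complex.norm_def, Complex.normSq_apply, hzre, hzim]
    congr 1; ring
  have hre := re_cpow_half z (by rw [hzim]; exact hbne)
  rw [habs, hzre] at hre
  have hresqrt : (z ^ ((1:ℂ)/2)).re
      = (1 / Real.sqrt 2) * Real.sqrt (a + Real.sqrt (a ^ 2 + b ^ 2)) := by
    rw [hre, show Real.sqrt (a ^ 2 + b ^ 2) + a = a + Real.sqrt (a ^ 2 + b ^ 2) by ring,
      Real.sqrt_div hsumnn]
    ring
  have hcomp : (-(((μ / 2 * ξ ^ 2 : ℝ) : ℂ)) - Complex.I * (ξ : ℂ) * ((ms / ρs : ℝ) : ℂ)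
            + (1 / 2 : ℂ) * z ^ ((1 : ℂ) / 2)).re
      = -(μ / 2 * ξ ^ 2) + (1/2) * (z ^ ((1:ℂ)/2)).re := by
    simp only [Complex.add_re, Complex.sub_re, Complex.neg_re, Complex.ofReal_re,
      Complex.mul_re, Complex.mul_im, Complex.I_re, Complex.I_im, Complex.ofReal_im]
    norm_num
  rw [hcomp, hresqrt]
  linarith [hfirst]
end

section
/- Let A* = [[0, 1], [γρ*^{γ−1} − m*²/ρ*², 2m*/ρ*]] and C* = [[0, 0], [k²/2, 0]] with k > 0. Then there exists no real symmetric positive definite 2×2 matrix S such that S·A* and S·C* are both symmetric. (Hence the linearized viscous QHD system is not symmetrizable in the sense of Friedrichs.) -/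
/-- The linearized viscous QHD system is not symmetrizable in the sense of Friedrichs:
with `A* = [[0,1],[γρ*^{γ−1} − m*²/ρ*², 2m*/ρ*]]` and `C* = [[0,0],[k²/2,0]]`, `k > 0`,
there is no real symmetric positive definite `2×2` matrix `S` such that `S·A*` and `S·C*`
are both symmetric. -/
theorem not_Friedrichs_symmetrizable
    (ρs ms μ k γ : ℝ) (hρ : 0 < ρs) (hμ : 0 < μ) (hk : 0 < k) (hγ : 1 < γ) :
    ¬ ∃ S : Matrix (Fin 2) (Fin 2) ℝ, S.IsSymm ∧ S.PosDef ∧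
        (S * !![0, 1; γ * ρs ^ (γ - 1) - ms ^ 2 / ρs ^ 2, 2 * ms / ρs]).IsSymm ∧
        (S * !![0, 0; k ^ 2 / 2, 0]).IsSymm := by
  rintro ⟨S, hsym, hpd, hSA, hSC⟩
  have hdiag : 0 < S 1 1 := by
    have := hpd.dotProduct_mulVec_pos (x := Pi.single 1 1) (by intro h; simpa using congrFun h 1)
    simpa [dotProduct, Matrix.mulVec, Fin.sum_univ_two] using this
  have h01 := hSC.apply 1 0
  have h0 : S 1 1 * (k ^ 2 / 2) = 0 := by
    simpa [Matrix.mul_apply, Fin.sum_univ_two] using h01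
  have hk2 : 0 < k ^ 2 / 2 := by positivity
  nlinarith
end
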